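/- Let δ ≥ 0, p ∈ (1,∞), and let F(A) = (δ + |A^sym|)^((p-2)/2) A^sym. For every ε > 0 there exists c_ε ≥ 1 depending only on ε, p, δ such that for all d×d matrices A, B and all r ≥ 0: φ_{|A^sym|}(r) ≤ c_ε · φ_{|B^sym|}(r) + ε · |F(A) - F(B)|², where φ_a denotes the shifted N-function with φ_a'(t) = (δ+a+t)^(p-2)·t·(a+t)/(a+t). -/

import Mathlib

/-!
Put `x = δ + |A^sym|`, `y = δ + |B^sym|`, `q = p - 2`. For `p > 1` the integrand
`s ↦ (x + s)^q s` of `φ_{|A^sym|}` is nondecreasing, so `φ_{|A^sym|}(r)` is comparable to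
`(x + r)^q r²` up to factors depending only on `p`. Fix a large `L`. If
`|x - y| < L (min x y + r)`, then `x + r` and `y + r` agree up to the factor `1 + L`, and so do
`(x + r)^q` and `(y + r)^q`. Otherwise `r ≤ |x - y| / L` and `max x y ≤ 2 |x - y|`, which gives
`(x + r)^q r² ≤ 2^|q| L^(-min p 2) (max x y)^q (x - y)²`, an arbitrarily small multiple. The
last quantity is at most `4 |F(A) - F(B)|²`: `G(t) = (δ + t)^(q/2) t` satisfies
`G(a) - G(b) ≥ (δ + a)^(q/2) (a - b) / 2` for `b ≤ a` (Bernoulli's inequality when `q < 0`),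
and `|F(A) - F(B)| ≥ |G(|A^sym|) - G(|B^sym|)|`.
-/

/-- The shifted N-function `φ_a(t) = ∫₀ᵗ φ'(a+s)·s/(a+s) ds`, where `φ'(t) = (δ+t)^(p-2) t`. -/
noncomputable def shiftedN (δ p a : ℝ) (t : ℝ) : ℝ :=
  ∫ s in (0:ℝ)..t, (δ + (a + s)) ^ (p - 2) * (a + s) * (s / (a + s))

/-- The Fenchel conjugate of a function `f : ℝ → ℝ` over `t ≥ 0`:
`f*(s) = sup_{t ≥ 0} (s·t - f(t))`. -/
noncomputable def fenchel (f : ℝ → ℝ) (s : ℝ) : ℝ :=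
  sSup {x : ℝ | ∃ t : ℝ, 0 ≤ t ∧ x = s * t - f t}

open Matrix in
/-- Symmetric part of a square matrix. -/
noncomputable def msym {d : ℕ} (A : Matrix (Fin d) (Fin d) ℝ) : Matrix (Fin d) (Fin d) ℝ :=
  (1/2 : ℝ) • (A + Aᵀ)

/-- Frobenius norm of a matrix. -/
noncomputable def frob {d : ℕ} (A : Matrix (Fin d) (Fin d) ℝ) : ℝ :=
  Real.sqrt (∑ i, ∑ j, (A i j) ^ 2)

/-- Frobenius inner product of two matrices. -/
noncomputable def frobInner {d : ℕ} (A B : Matrix (Fin d) (Fin d) ℝ) : ℝ :=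
  ∑ i, ∑ j, A i j * B i j

/-- The extra-stress tensor `S(A) = (δ + |A^sym|)^(p-2) A^sym` (with `ν₀ = 1`). -/
noncomputable def Smap (δ p : ℝ) {d : ℕ} (A : Matrix (Fin d) (Fin d) ℝ) :
    Matrix (Fin d) (Fin d) ℝ :=
  ((δ + frob (msym A)) ^ (p - 2)) • msym A

/-- The nonlinear quantity `F(A) = (δ + |A^sym|)^((p-2)/2) A^sym`. -/
noncomputable def Fmap (δ p : ℝ) {d : ℕ} (A : Matrix (Fin d) (Fin d) ℝ) :
    Matrix (Fin d) (Fin d) ℝ :=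
  ((δ + frob (msym A)) ^ ((p - 2) / 2)) • msym A

open Real MeasureTheory intervalIntegral Set Filter Topology

lemma rpow_le_one_add_rpow_abs_mul_rpow {x y L q : ℝ} (hx : 0 < x) (hy : 0 < y) (hL : 0 ≤ L)
    (hxy : |x - y| ≤ L * min x y) : x ^ q ≤ (1 + L) ^ |q| * y ^ q := by
  obtain ⟨hxy₁, hxy₂⟩ := abs_sub_le_iff.1 hxy
  have hx' : x ≤ (1 + L) * y := by nlinarith [mul_le_mul_of_nonneg_left (min_le_right x y) hL]
  have hy' : y ≤ (1 + L) * x := by nlinarith [mul_le_mul_of_nonneg_left (min_le_left x y) hL]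
  rcases le_total 0 q with hq | hq
  · rw [abs_of_nonneg hq, ← mul_rpow (by linarith) hy.le]
    exact rpow_le_rpow hx.le hx' hq
  · rw [abs_of_nonpos hq, rpow_neg (by linarith), ← div_eq_inv_mul,
      ← div_rpow hy.le (by linarith)]
    exact rpow_le_rpow_of_nonpos (div_pos hy (by linarith))
      ((div_le_iff₀ (by linarith)).2 (by linarith)) hq

lemma integral_le_mul_of_monotoneOn {f : ℝ → ℝ} {r : ℝ} (hr : 0 ≤ r)
    (hf : MonotoneOn f (Icc 0 r)) : ∫ s in 0..r, f s ≤ r * f r := by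
  have hint : IntervalIntegrable f volume 0 r :=
    MonotoneOn.intervalIntegrable (by rwa [uIcc_of_le hr])
  calc ∫ s in 0..r, f s ≤ ∫ _ in 0..r, f r :=
        integral_mono_on hr hint intervalIntegrable_const
          fun s hs => hf hs ⟨hr, le_rfl⟩ hs.2
    _ = r * f r := by simp

lemma mul_le_integral_of_monotoneOn {f : ℝ → ℝ} {r : ℝ} (hr : 0 ≤ r)
    (hf : MonotoneOn f (Icc 0 r)) (hf₀ : 0 ≤ f 0) : r / 2 * f (r / 2) ≤ ∫ s in 0..r, f s := by
  have hint : IntervalIntegrable f volume 0 r :=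
    MonotoneOn.intervalIntegrable (by rwa [uIcc_of_le hr])
  have hint₁ : IntervalIntegrable f volume 0 (r / 2) :=
    hint.mono_set
      (uIcc_subset_uIcc left_mem_uIcc (by rw [uIcc_of_le hr]; constructor <;> linarith))
  have hint₂ : IntervalIntegrable f volume (r / 2) r :=
    hint.mono_set
      (uIcc_subset_uIcc (by rw [uIcc_of_le hr]; constructor <;> linarith) right_mem_uIcc)
  have hfirst : 0 ≤ ∫ s in 0..r / 2, f s :=
    integral_nonneg (by linarith) fun s hs =>
      hf₀.trans (hf ⟨le_rfl, hr⟩ ⟨hs.1, by linarith [hs.2]⟩ hs.1)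
  have hsecond : ∫ _ in r / 2..r, f (r / 2) ≤ ∫ s in r / 2..r, f s :=
    integral_mono_on (by linarith) intervalIntegrable_const hint₂
      fun s hs => hf ⟨by linarith, by linarith⟩ ⟨by linarith [hs.1], hs.2⟩ hs.1
  rw [← integral_add_adjacent_intervals hint₁ hint₂]
  simp only [intervalIntegral.integral_const, smul_eq_mul] at hsecond
  linarith

lemma monotoneOn_rpow_sub_two_mul {p c : ℝ} (hp : 1 < p) (hc : 0 ≤ c) :
    MonotoneOn (fun s => (c + s) ^ (p - 2) * s) (Ici 0) := by
  -- both factors on the right are nondecreasing in `u`, as `p - 1 > 0` and `c ≥ 0`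
  have hsplit : ∀ u, 0 < c + u → (c + u) ^ (p - 2) * u = (c + u) ^ (p - 1) * (u / (c + u)) := by
    intro u hu
    rw [show p - 2 = p - 1 - 1 by ring, rpow_sub_one hu.ne']
    ring
  intro s (hs : 0 ≤ s) t (ht : 0 ≤ t) hst
  rcases (add_nonneg hc hs).eq_or_lt with hcs | hcs
  · obtain rfl : s = 0 := by linarith
    simp only [mul_zero]
    positivity
  have hct : 0 < c + t := by linarith
  simp only [hsplit s hcs, hsplit t hct]
  refine mul_le_mul (by gcongr) ?_ (by positivity) (by positivity)
  rw [div_le_div_iff₀ hcs hct]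
  nlinarith

lemma integral_rpow_sub_two_mul_le {p c r : ℝ} (hp : 1 < p) (hc : 0 ≤ c) (hr : 0 ≤ r) :
    ∫ s in 0..r, (c + s) ^ (p - 2) * s ≤ (c + r) ^ (p - 2) * r ^ 2 := by
  calc ∫ s in 0..r, (c + s) ^ (p - 2) * s ≤ r * ((c + r) ^ (p - 2) * r) :=
        integral_le_mul_of_monotoneOn hr
          ((monotoneOn_rpow_sub_two_mul hp hc).mono Icc_subset_Ici_self)
    _ = (c + r) ^ (p - 2) * r ^ 2 := by ring

lemma rpow_sub_two_mul_le_integral {p c r : ℝ} (hp : 1 < p) (hc : 0 ≤ c) (hr : 0 ≤ r) :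
    (c + r) ^ (p - 2) * r ^ 2 ≤ 4 * 2 ^ |p - 2| * ∫ s in 0..r, (c + s) ^ (p - 2) * s := by
  rcases hr.eq_or_lt with rfl | hr₀
  · simp
  have hratio : (c + r) ^ (p - 2) ≤ 2 ^ |p - 2| * (c + r / 2) ^ (p - 2) := by
    have h := rpow_le_one_add_rpow_abs_mul_rpow (q := p - 2) (by positivity) (by positivity)
      zero_le_one (x := c + r) (y := c + r / 2)
      (by rw [min_eq_right (by linarith), abs_of_nonneg (by linarith)]; linarith)
    norm_num at h
    exact h
  have hint := mul_le_integral_of_monotoneOn hr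
    ((monotoneOn_rpow_sub_two_mul hp hc).mono Icc_subset_Ici_self) (by simp)
  calc (c + r) ^ (p - 2) * r ^ 2 ≤ 2 ^ |p - 2| * (c + r / 2) ^ (p - 2) * r ^ 2 := by gcongr
    _ = 4 * 2 ^ |p - 2| * (r / 2 * ((c + r / 2) ^ (p - 2) * (r / 2))) := by ring
    _ ≤ 4 * 2 ^ |p - 2| * ∫ s in 0..r, (c + s) ^ (p - 2) * s := by gcongr

lemma shiftedN_eq_integral {δ p a r : ℝ} (ha : 0 ≤ a) (hr : 0 ≤ r) :
    shiftedN δ p a r = ∫ s in 0..r, (δ + a + s) ^ (p - 2) * s := by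
  refine integral_congr fun s hs => ?_
  rw [uIcc_of_le hr] at hs
  rcases (add_nonneg ha hs.1).eq_or_lt with has | has
  · obtain rfl : s = 0 := by linarith [hs.1]
    simp
  · simp only [add_assoc, mul_assoc, mul_div_cancel₀ s has.ne']

lemma rpow_sub_two_mul_sq_le_of_far {p x y r L : ℝ} (hp : 0 < p) (hx : 0 ≤ x) (hy : 0 ≤ y)
    (hr : 0 ≤ r) (hL : 1 ≤ L) (hfar : L * (min x y + r) ≤ |x - y|) :
    (x + r) ^ (p - 2) * r ^ 2 ≤
      2 ^ |p - 2| * L ^ (-min p 2) * (max x y ^ (p - 2) * (x - y) ^ 2) := by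
  have hm : max x y = min x y + |x - y| := by rw [← max_sub_min_eq_abs']; ring
  set m := max x y
  set h := |x - y|
  have hmin : 0 ≤ min x y := le_min hx hy
  have hLr : L * r ≤ h := by nlinarith
  have hmin_le : min x y ≤ h := by nlinarith
  rw [← sq_abs (x - y)]
  rcases hr.eq_or_lt with rfl | hr₀
  · simp only [ne_eq, OfNat.ofNat_ne_zero, not_false_eq_true, zero_pow, mul_zero]
    positivity
  have hh : 0 < h := by nlinarith
  have hL₀ : 0 < L := by linarith
  rcases le_total 0 (p - 2) with hq | hq
  · have h₁ : (x + r) ^ (p - 2) ≤ 2 ^ (p - 2) * m ^ (p - 2) := by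
      rw [← mul_rpow zero_le_two (by positivity)]
      exact rpow_le_rpow (by positivity) (by nlinarith [le_max_left x y]) hq
    have h₂ : r ^ 2 ≤ L ^ (-2 : ℝ) * h ^ 2 := by
      rw [rpow_neg hL₀.le, rpow_two, ← div_eq_inv_mul, le_div_iff₀ (by positivity), mul_comm,
        ← mul_pow]
      exact pow_le_pow_left₀ (by positivity) hLr 2
    rw [abs_of_nonneg hq, min_eq_right (by linarith)]
    calc (x + r) ^ (p - 2) * r ^ 2 ≤ 2 ^ (p - 2) * m ^ (p - 2) * (L ^ (-2 : ℝ) * h ^ 2) := by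
          gcongr
      _ = 2 ^ (p - 2) * L ^ (-2 : ℝ) * (m ^ (p - 2) * h ^ 2) := by ring
  · have h₁ : (x + r) ^ (p - 2) ≤ r ^ (p - 2) := rpow_le_rpow_of_nonpos hr₀ (by linarith) hq
    have h₂ : r ^ p ≤ L ^ (-p) * h ^ p := by
      rw [rpow_neg hL₀.le, ← div_eq_inv_mul, ← div_rpow hh.le hL₀.le]
      exact rpow_le_rpow hr ((le_div_iff₀ hL₀).2 (by linarith)) hp.le
    have h₃ : 2 ^ (p - 2) * h ^ (p - 2) ≤ m ^ (p - 2) := by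
      rw [← mul_rpow zero_le_two hh.le]
      exact rpow_le_rpow_of_nonpos (by linarith) (by linarith) hq
    have hsplit : ∀ u : ℝ, 0 < u → u ^ p = u ^ (p - 2) * u ^ 2 := by
      intro u hu
      rw [← rpow_natCast, ← rpow_add hu]
      norm_num
    rw [abs_of_nonpos hq, min_eq_left (by linarith)]
    calc (x + r) ^ (p - 2) * r ^ 2 ≤ r ^ (p - 2) * r ^ 2 := by gcongr
      _ = r ^ p := (hsplit r hr₀).symm
      _ ≤ L ^ (-p) * (h ^ (p - 2) * h ^ 2) := by rw [← hsplit h hh]; exact h₂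
      _ = 2 ^ (-(p - 2)) * L ^ (-p) * ((2 ^ (p - 2) * h ^ (p - 2)) * h ^ 2) := by
          rw [rpow_neg zero_le_two]
          field_simp
      _ ≤ 2 ^ (-(p - 2)) * L ^ (-p) * (m ^ (p - 2) * h ^ 2) := by gcongr

lemma rpow_sub_two_mul_sq_le_of_near {p x y r L : ℝ} (hL : 0 ≤ L)
    (hnear : |x - y| < L * (min x y + r)) :
    (x + r) ^ (p - 2) * r ^ 2 ≤ (1 + L) ^ |p - 2| * ((y + r) ^ (p - 2) * r ^ 2) := by
  have hpos : 0 < min x y + r := pos_of_mul_pos_right ((abs_nonneg _).trans_lt hnear) hL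
  have h := rpow_le_one_add_rpow_abs_mul_rpow (q := p - 2) (x := x + r) (y := y + r)
    (by linarith [min_le_left x y]) (by linarith [min_le_right x y]) hL
    (by rw [min_add_add_right, add_sub_add_right_eq_sub]; exact hnear.le)
  rw [← mul_assoc]
  gcongr

theorem exists_rpow_sub_two_mul_sq_le {p ε : ℝ} (hp : 0 < p) (hε : 0 < ε) :
    ∃ C, 1 ≤ C ∧ ∀ x y r : ℝ, 0 ≤ x → 0 ≤ y → 0 ≤ r →
      (x + r) ^ (p - 2) * r ^ 2 ≤
        C * ((y + r) ^ (p - 2) * r ^ 2) + ε * (max x y ^ (p - 2) * (x - y) ^ 2) := by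
  obtain ⟨L, hLε, hL⟩ : ∃ L : ℝ, 2 ^ |p - 2| * L ^ (-min p 2) ≤ ε ∧ 1 ≤ L := by
    have hlim : Tendsto (fun L : ℝ => 2 ^ |p - 2| * L ^ (-min p 2)) atTop (𝓝 0) := by
      simpa using (tendsto_rpow_neg_atTop (lt_min hp two_pos)).const_mul (2 ^ |p - 2|)
    exact ((hlim.eventually (ge_mem_nhds hε)).and (eventually_ge_atTop 1)).exists
  refine ⟨(1 + L) ^ |p - 2|, one_le_rpow (by linarith) (abs_nonneg _),
    fun x y r hx hy hr => ?_⟩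
  have hG : 0 ≤ max x y ^ (p - 2) * (x - y) ^ 2 := by
    have : 0 ≤ max x y := le_max_of_le_left hx
    positivity
  rcases le_or_gt (L * (min x y + r)) |x - y| with hfar | hnear
  · have hC : 0 ≤ (1 + L) ^ |p - 2| * ((y + r) ^ (p - 2) * r ^ 2) := by positivity
    have hsmall := mul_le_mul_of_nonneg_right hLε hG
    linarith [rpow_sub_two_mul_sq_le_of_far hp hx hy hr hL hfar]
  · have hεG : 0 ≤ ε * (max x y ^ (p - 2) * (x - y) ^ 2) := by positivity
    linarith [rpow_sub_two_mul_sq_le_of_near (p := p) (by linarith) hnear]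

lemma one_add_mul_rpow_mul_sub_le {δ e a b : ℝ} (hδ : 0 ≤ δ) (he : -1 ≤ e) (he₀ : e ≤ 0)
    (hb : 0 ≤ b) (hba : b ≤ a) :
    (1 + e) * ((δ + a) ^ e * (a - b)) ≤ (δ + a) ^ e * a - (δ + b) ^ e * b := by
  have hxe : 0 ≤ (δ + a) ^ e := rpow_nonneg (by linarith) e
  rcases (add_nonneg hδ hb).eq_or_lt with hy | hy
  · obtain rfl : b = 0 := by linarith
    nlinarith [mul_nonneg hxe (hb.trans hba)]
  have hx : 0 < δ + a := by linarith
  -- with `ρ = (δ + b)/(δ + a) ≤ 1`, Bernoulli's inequality bounds `ρ ^ (1 + e) - ρ` by `-e (1 - ρ)`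
  set ρ := (δ + b) / (δ + a) with hρ
  have hρ₀ : 0 < ρ := div_pos hy hx
  have hρ₁ : ρ ≤ 1 := (div_le_one hx).2 (by linarith)
  have hy_eq : δ + b = ρ * (δ + a) := by rw [hρ, div_mul_cancel₀ _ hx.ne']
  have hρe : 1 ≤ ρ ^ e := one_le_rpow_of_pos_of_le_one_of_nonpos hρ₀ hρ₁ he₀
  have hbern : ρ * ρ ^ e ≤ 1 + (1 + e) * (ρ - 1) := by
    have h := rpow_one_add_le_one_add_mul_self (s := ρ - 1) (by linarith) (by linarith)
      (by linarith : 1 + e ≤ 1)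
    rwa [add_sub_cancel, rpow_add hρ₀, rpow_one] at h
  have hkey : b * (ρ ^ e - 1) ≤ -e * (a - b) := by
    have hab : (δ + a) * (1 - ρ) = a - b := by linarith
    calc b * (ρ ^ e - 1) ≤ (δ + b) * (ρ ^ e - 1) := by gcongr; linarith
      _ = (δ + a) * (ρ * ρ ^ e - ρ) := by rw [hy_eq]; ring
      _ ≤ (δ + a) * (-e * (1 - ρ)) := by gcongr; linarith
      _ = -e * (a - b) := by rw [← hab]; ring
  rw [hy_eq, mul_rpow hρ₀.le hx.le]
  nlinarith [mul_le_mul_of_nonneg_left hkey hxe]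

lemma rpow_mul_abs_sub_le {δ p a b : ℝ} (hδ : 0 ≤ δ) (hp : 1 ≤ p) (ha : 0 ≤ a) (hb : 0 ≤ b) :
    (δ + max a b) ^ ((p - 2) / 2) * |a - b| ≤
      2 * |(δ + a) ^ ((p - 2) / 2) * a - (δ + b) ^ ((p - 2) / 2) * b| := by
  wlog hba : b ≤ a generalizing a b
  · rw [max_comm, abs_sub_comm a, abs_sub_comm ((δ + a) ^ _ * a)]
    exact this hb ha (by linarith)
  rw [max_eq_left hba, abs_of_nonneg (by linarith : 0 ≤ a - b)]
  refine le_trans ?_ (mul_le_mul_of_nonneg_left (le_abs_self _) zero_le_two)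
  have hxe : 0 ≤ (δ + a) ^ ((p - 2) / 2) * (a - b) := by
    have : 0 ≤ a - b := by linarith
    positivity
  rcases le_total 0 ((p - 2) / 2) with he | he
  · have h : (δ + b) ^ ((p - 2) / 2) ≤ (δ + a) ^ ((p - 2) / 2) := by gcongr
    nlinarith [mul_le_mul_of_nonneg_right h hb]
  · have h := one_add_mul_rpow_mul_sub_le hδ (by linarith) he hb hba
    nlinarith

section Frobenius

attribute [local instance] Matrix.frobeniusNormedAddCommGroup Matrix.frobeniusNormedSpace

lemma frob_eq_norm {d : ℕ} (A : Matrix (Fin d) (Fin d) ℝ) : frob A = ‖A‖ := by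
  simp only [frob, Matrix.frobenius_norm_def, Real.norm_eq_abs, Real.rpow_two, sq_abs,
    Real.sqrt_eq_rpow]

lemma rpow_mul_sq_le_frob_Fmap_sub {δ p : ℝ} (hδ : 0 ≤ δ) (hp : 1 ≤ p) {d : ℕ}
    (A B : Matrix (Fin d) (Fin d) ℝ) :
    (δ + max (frob (msym A)) (frob (msym B))) ^ (p - 2) * (frob (msym A) - frob (msym B)) ^ 2 ≤
      4 * frob (Fmap δ p A - Fmap δ p B) ^ 2 := by
  simp only [frob_eq_norm]
  have hnorm : ∀ M : Matrix (Fin d) (Fin d) ℝ,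
      ‖Fmap δ p M‖ = (δ + ‖msym M‖) ^ ((p - 2) / 2) * ‖msym M‖ := by
    intro M
    rw [Fmap, frob_eq_norm, norm_smul, norm_of_nonneg (by positivity)]
  have hm : 0 ≤ δ + max ‖msym A‖ ‖msym B‖ := by positivity
  have hF : |(δ + ‖msym A‖) ^ ((p - 2) / 2) * ‖msym A‖ - (δ + ‖msym B‖) ^ ((p - 2) / 2) * ‖msym B‖|
      ≤ ‖Fmap δ p A - Fmap δ p B‖ := by
    rw [← hnorm, ← hnorm]
    exact abs_norm_sub_norm_le _ _
  have h := (rpow_mul_abs_sub_le hδ hp (norm_nonneg (msym A)) (norm_nonneg (msym B))).trans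
    (mul_le_mul_of_nonneg_left hF zero_le_two)
  calc (δ + max ‖msym A‖ ‖msym B‖) ^ (p - 2) * (‖msym A‖ - ‖msym B‖) ^ 2
      = ((δ + max ‖msym A‖ ‖msym B‖) ^ ((p - 2) / 2) * |‖msym A‖ - ‖msym B‖|) ^ 2 := by
        rw [mul_pow, sq_abs, ← rpow_mul_natCast hm]
        norm_num
    _ ≤ (2 * ‖Fmap δ p A - Fmap δ p B‖) ^ 2 := by gcongr
    _ = 4 * ‖Fmap δ p A - Fmap δ p B‖ ^ 2 := by ring

end Frobenius

/-- shift-change inequality: for every `ε > 0` there is `c_ε ≥ 1` (depending on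
`ε`, `p`, `δ`) such that `φ_{|A^sym|}(r) ≤ c_ε·φ_{|B^sym|}(r) + ε·|F(A)-F(B)|²`. -/
theorem shift_change (δ p : ℝ) (hδ : 0 ≤ δ) (hp : 1 < p) :
    ∀ ε : ℝ, 0 < ε → ∃ c : ℝ, 1 ≤ c ∧
      ∀ (d : ℕ) (A B : Matrix (Fin d) (Fin d) ℝ) (r : ℝ), 0 ≤ r →
        shiftedN δ p (frob (msym A)) r ≤
          c * shiftedN δ p (frob (msym B)) r
            + ε * frob (Fmap δ p A - Fmap δ p B) ^ 2 := by
  intro ε hε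
  obtain ⟨C, hC, hpointwise⟩ :=
    exists_rpow_sub_two_mul_sq_le (by linarith : 0 < p) (by positivity : 0 < ε / 4)
  refine ⟨4 * 2 ^ |p - 2| * C, ?_, fun d A B r hr => ?_⟩
  · have : (1 : ℝ) ≤ 2 ^ |p - 2| := one_le_rpow one_le_two (abs_nonneg _)
    nlinarith
  set a := frob (msym A)
  set b := frob (msym B)
  have ha : 0 ≤ a := sqrt_nonneg _
  have hb : 0 ≤ b := sqrt_nonneg _
  have hupper : shiftedN δ p a r ≤ (δ + a + r) ^ (p - 2) * r ^ 2 :=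
    (shiftedN_eq_integral ha hr).trans_le (integral_rpow_sub_two_mul_le hp (by positivity) hr)
  have hlower : (δ + b + r) ^ (p - 2) * r ^ 2 ≤ 4 * 2 ^ |p - 2| * shiftedN δ p b r :=
    (shiftedN_eq_integral hb hr).symm ▸ rpow_sub_two_mul_le_integral hp (by positivity) hr
  have hshift := hpointwise (δ + a) (δ + b) r (by positivity) (by positivity) hr
  rw [max_add_add_left, add_sub_add_left_eq_sub] at hshift
  calc shiftedN δ p a r
      ≤ C * ((δ + b + r) ^ (p - 2) * r ^ 2) + ε / 4 * ((δ + max a b) ^ (p - 2) * (a - b) ^ 2) :=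
        hupper.trans hshift
    _ ≤ C * (4 * 2 ^ |p - 2| * shiftedN δ p b r)
          + ε / 4 * (4 * frob (Fmap δ p A - Fmap δ p B) ^ 2) := by
        gcongr C * ?_ + ε / 4 * ?_
        exact rpow_mul_sq_le_frob_Fmap_sub hδ hp.le A B
    _ = 4 * 2 ^ |p - 2| * C * shiftedN δ p b r + ε * frob (Fmap δ p A - Fmap δ p B) ^ 2 := by
        ring
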